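/- Let 𝒢 = 𝒢_1 ∪ ⋯ ∪ 𝒢_r, where for each 1 ≤ i ≤ r the graph 𝒢_i has m_i connected components, each of which is a cycle of odd length k_i = 2γ_i+1. Then the vanishing ideal of X*_𝒢 equals the ideal of the polynomial ring K[t^1_1,…,t^1_{k_1m_1},…,t^r_1,…,t^r_{k_rm_r}] generated by all polynomials (t^i_j)^{q−1}−1 (1 ≤ i ≤ r, 1 ≤ j ≤ k_i m_i) together with the binomials in ⋃_{i=1}^r ⋃_{j=1}^{m_i} A^i_j. -/

import Mathlib

/-!
An ideal of `K[t]` containing every `t_v ^ q - t_v` is the vanishing ideal of its zero locus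
(finite-field Nullstellensatz, here deduced from Alon's combinatorial Nullstellensatz), and the
generators `t_v ^ (q - 1) - 1` contain these. So it suffices to see that the generators cut out
exactly `X*_𝒢`. A point `y` is a common zero iff all `y_v ≠ 0` and, on every cycle, one (hence
every) binomial of `A^i_j` vanishes; as `y_v ^ ((q - 1) / 2) = ±1`, that says
`(∏ y) ^ ((q - 1) / 2) = 1`, i.e. by Euler's criterion the product over the cycle is a square.
Conversely, `y_l = x_l x_{l+1}` gives `∏ y = (∏ x) ^ 2`, and on an odd cycle every `y` with
square product arises this way.
-/

open MvPolynomial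

/-- The affine algebraic toric set parameterized by the disjoint union `𝒢 = 𝒢₁ ∪ ⋯ ∪ 𝒢_r`,
where `𝒢_i` is the disjoint union of `mf i` cycles of length `kf i`. The coordinates (one for
each edge of `𝒢`) are indexed by triples `⟨i, j, l⟩` (the `l`-th edge of the `j`-th cycle of
`𝒢_i`), and the coordinate at `⟨i, j, l⟩` is `x ⟨i, j, l⟩ * x ⟨i, j, l+1⟩`, the edge index `l`
being taken cyclically in its cycle. -/
def unionCyclesToricSet (K : Type) [Field K] (r : ℕ) (kf mf : Fin r → ℕ) :
    Set ((i : Fin r) × (Fin (mf i) × Fin (kf i)) → K) :=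
  {y | ∃ x : (i : Fin r) × (Fin (mf i) × Fin (kf i)) → K, (∀ p, x p ≠ 0) ∧
    ∀ p : (i : Fin r) × (Fin (mf i) × Fin (kf i)),
      y p = x p * x ⟨p.1, (p.2.1, finRotate (kf p.1) p.2.2)⟩}

/-- The set `A^i_j` of binomials attached to the `j`-th cycle of `𝒢_i`. -/
def unionCycleBinomials (K : Type) [Field K] (q r : ℕ) (kf mf γf : Fin r → ℕ)
    (i : Fin r) (j : Fin (mf i)) :
    Set (MvPolynomial ((i : Fin r) × (Fin (mf i) × Fin (kf i))) K) :=
  {f | ∃ s : Finset (Fin (kf i)), s.card = γf i ∧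
    f = (∏ α ∈ s, X (⟨i, (j, α)⟩ : (i : Fin r) × (Fin (mf i) × Fin (kf i))) ^ ((q - 1) / 2)) -
        ∏ w ∈ sᶜ, X (⟨i, (j, w)⟩ : (i : Fin r) × (Fin (mf i) × Fin (kf i))) ^ ((q - 1) / 2)}

section FieldEquations

variable {K : Type*} [Field K] [Fintype K]

theorem FiniteField.prod_X_sub_C_eq_X_pow_card_sub_X :
    ∏ a : K, (Polynomial.X - Polynomial.C a) = Polynomial.X ^ Fintype.card K - Polynomial.X := by
  have hroots := FiniteField.roots_X_pow_card_sub_X K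
  rw [Finset.prod_eq_multiset_prod, ← hroots]
  refine Polynomial.prod_multiset_X_sub_C_of_monic_of_roots_card_eq ?_ ?_
  · exact Polynomial.monic_X_pow_sub (by simpa using Fintype.one_lt_card)
  · rw [hroots, FiniteField.X_pow_card_sub_X_natDegree_eq K Fintype.one_lt_card]
    rfl

theorem MvPolynomial.prod_X_sub_C_eq_X_pow_card_sub_X {σ : Type*} (i : σ) :
    ∏ a : K, (X i - C a : MvPolynomial σ K) = X i ^ Fintype.card K - X i := by
  simpa [MvPolynomial.algebraMap_eq] using
    congrArg (Polynomial.aeval (X i : MvPolynomial σ K))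
      (FiniteField.prod_X_sub_C_eq_X_pow_card_sub_X (K := K))

variable {σ : Type*} [Finite σ] {J : Ideal (MvPolynomial σ K)}

theorem MvPolynomial.mem_of_forall_eval_eq_zero (hJ : ∀ i, X i ^ Fintype.card K - X i ∈ J)
    {f : MvPolynomial σ K} (hf : ∀ x, eval x f = 0) : f ∈ J := by
  obtain ⟨h, -, rfl⟩ := combinatorial_nullstellensatz_exists_linearCombination
    (fun _ ↦ Finset.univ) (fun _ ↦ Finset.univ_nonempty) f fun x _ ↦ hf x
  rw [Finsupp.linearCombination_apply]
  refine Ideal.sum_mem _ fun i _ ↦ J.mul_mem_left _ ?_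
  simpa only [prod_X_sub_C_eq_X_pow_card_sub_X] using hJ i

theorem MvPolynomial.vanishingIdeal_zeroLocus_eq_of_X_pow_card_sub_X_mem
    (hJ : ∀ i, X i ^ Fintype.card K - X i ∈ J) : vanishingIdeal K (zeroLocus K J) = J := by
  classical
  have := Fintype.ofFinite σ
  refine le_antisymm (fun f hf ↦ ?_) (le_vanishingIdeal_zeroLocus J)
  have hsep : ∀ a : σ → K, ∃ g ∈ J, a ∉ zeroLocus K J → eval a g ≠ 0 := by
    intro a
    by_cases ha : a ∈ zeroLocus K J
    · exact ⟨0, J.zero_mem, absurd ha⟩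
    · simp only [mem_zeroLocus_iff, not_forall] at ha
      obtain ⟨g, hg, hga⟩ := ha
      exact ⟨g, hg, fun _ ↦ hga⟩
  choose g hgJ hga using hsep
  -- `u` vanishes off the zero locus of `J` and is `1` modulo `J`.
  set u := ∏ a, (1 - C (eval a (g a))⁻¹ * g a)
  have hu : u - 1 ∈ J := by
    rw [← Ideal.Quotient.eq]
    simp [u, Ideal.Quotient.eq_zero_iff_mem.2 (hgJ _)]
  have hfu : f * u ∈ J := mem_of_forall_eval_eq_zero hJ fun x ↦ by
    by_cases hx : x ∈ zeroLocus K J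
    · simpa using Or.inl (hf x hx)
    · rw [map_mul, map_prod, Finset.prod_eq_zero (Finset.mem_univ x), mul_zero]
      simp [hga x hx]
  convert sub_mem hfu (J.mul_mem_left f hu) using 1
  ring

end FieldEquations

theorem Finset.prod_eq_prod_compl_iff_prod_univ_eq_one {M ι : Type*} [CommMonoid M] [Fintype ι]
    [DecidableEq ι] {u : ι → M} (hu : ∀ m, u m * u m = 1) (s : Finset ι) :
    ∏ m ∈ s, u m = ∏ m ∈ sᶜ, u m ↔ ∏ m, u m = 1 := by
  have hs : (∏ m ∈ s, u m) * ∏ m ∈ s, u m = 1 := by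
    rw [← Finset.prod_mul_distrib]
    exact Finset.prod_eq_one fun m _ ↦ hu m
  rw [← Finset.prod_mul_prod_compl s u]
  constructor
  · intro h
    rwa [← h]
  · intro h
    calc ∏ m ∈ s, u m = (∏ m ∈ s, u m) * ((∏ m ∈ s, u m) * ∏ m ∈ sᶜ, u m) := by
          rw [h, mul_one]
      _ = ∏ m ∈ sᶜ, u m := by rw [← mul_assoc, hs, one_mul]

section EulerCriterion

variable {K : Type*} [Field K] [Fintype K]

theorem FiniteField.pow_card_sub_one_eq_one_iff_ne_zero {a : K} :
    a ^ (Fintype.card K - 1) = 1 ↔ a ≠ 0 := by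
  refine ⟨fun h ha ↦ ?_, FiniteField.pow_card_sub_one_eq_one a⟩
  rw [ha, zero_pow (Nat.sub_ne_zero_of_lt Fintype.one_lt_card)] at h
  exact zero_ne_one h

theorem FiniteField.isSquare_iff_pow_card_sub_one_div_two_eq_one (hK : Odd (Fintype.card K))
    {a : K} (ha : a ≠ 0) : IsSquare a ↔ a ^ ((Fintype.card K - 1) / 2) = 1 := by
  have hchar : ringChar K ≠ 2 := fun h ↦ by
    have := FiniteField.even_card_of_char_two h
    rw [Nat.odd_iff] at hK
    omega
  rw [FiniteField.isSquare_iff hchar ha]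
  congr! 2
  rcases hK with ⟨n, hn⟩
  omega

theorem FiniteField.forall_prod_pow_eq_prod_compl_iff_isSquare {ι : Type*} [Fintype ι]
    [DecidableEq ι] (hK : Odd (Fintype.card K)) {γ : ℕ} (hγ : γ ≤ Fintype.card ι) {z : ι → K}
    (hz : ∀ m, z m ≠ 0) :
    (∀ s : Finset ι, s.card = γ →
      ∏ m ∈ s, z m ^ ((Fintype.card K - 1) / 2) =
        ∏ m ∈ sᶜ, z m ^ ((Fintype.card K - 1) / 2)) ↔
      IsSquare (∏ m, z m) := by
  have hu : ∀ m, z m ^ ((Fintype.card K - 1) / 2) * z m ^ ((Fintype.card K - 1) / 2) = 1 := by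
    have h2 : 2 * ((Fintype.card K - 1) / 2) = Fintype.card K - 1 := by
      obtain ⟨n, hn⟩ := hK
      omega
    intro m
    rw [← pow_add, ← two_mul, h2]
    exact FiniteField.pow_card_sub_one_eq_one _ (hz m)
  simp only [Finset.prod_eq_prod_compl_iff_prod_univ_eq_one hu]
  rw [Finset.prod_pow, ← isSquare_iff_pow_card_sub_one_div_two_eq_one hK
    (Finset.prod_ne_zero_iff.2 fun m _ ↦ hz m)]
  obtain ⟨s, hs⟩ := Finset.exists_subset_card_eq (s := Finset.univ) (by simpa using hγ)
  exact ⟨fun h ↦ h s hs.2, fun h _ _ ↦ h⟩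

end EulerCriterion

section OddCycle

open Fin.NatCast

theorem Finset.prod_range_two_mul {M : Type*} [CommMonoid M] (f : ℕ → M) (n : ℕ) :
    ∏ t ∈ range (2 * n), f t = ∏ s ∈ range n, f (2 * s) * f (2 * s + 1) := by
  induction n with
  | zero => simp
  | succ n ih =>
    rw [show 2 * (n + 1) = 2 * n + 1 + 1 by ring, prod_range_succ, prod_range_succ,
      prod_range_succ, ih, mul_assoc]

theorem Fin.prod_univ_eq_prod_range_add {M : Type*} [CommMonoid M] {n : ℕ}
    (z : Fin (n + 1) → M) (l : Fin (n + 1)) :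
    ∏ m, z m = ∏ t ∈ Finset.range (n + 1), z (l + (t : Fin (n + 1))) := by
  rw [← Fin.prod_univ_eq_prod_range (fun t ↦ z (l + (t : Fin (n + 1)))),
    ← Equiv.prod_comp (Equiv.addLeft l)]
  simp

theorem Fin.prod_univ_eq_mul_prod_pairs {M : Type*} [CommMonoid M] {γ : ℕ}
    (z : Fin (2 * γ + 1) → M) (l : Fin (2 * γ + 1)) :
    ∏ m, z m = z l * ∏ s ∈ Finset.range γ,
      z (l + ((2 * s + 1 : ℕ) : Fin _)) * z (l + ((2 * s + 1 : ℕ) : Fin _) + 1) := by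
  rw [Fin.prod_univ_eq_prod_range_add z l, Finset.prod_range_succ', Finset.prod_range_two_mul]
  simp only [Nat.cast_add, Nat.cast_one, Nat.cast_zero, add_zero, add_assoc, mul_comm]

theorem isSquare_prod_mul_finRotate {M : Type*} [CommMonoid M] {k : ℕ} (x : Fin k → M) :
    IsSquare (∏ m, x m * x (finRotate k m)) :=
  ⟨∏ m, x m, by rw [Finset.prod_mul_distrib, Equiv.prod_comp]⟩

theorem exists_mul_finRotate_eq_of_isSquare {K : Type*} [Field K] {γ : ℕ}
    {z : Fin (2 * γ + 1) → K} (hz : ∀ m, z m ≠ 0) (hsq : IsSquare (∏ m, z m)) :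
    ∃ x : Fin (2 * γ + 1) → K, (∀ m, x m ≠ 0) ∧ ∀ m, z m = x m * x (finRotate _ m) := by
  obtain ⟨c, hc⟩ := hsq
  have hc0 : c ≠ 0 := by
    rintro rfl
    exact Finset.prod_ne_zero_iff.2 (fun m _ ↦ hz m) (by simpa using hc)
  -- `x l = c / (z (l + 1) * z (l + 3) * ⋯ * z (l + 2γ - 1))`, so that
  -- `x l * x (l + 1) = c ^ 2 / ∏_{m ≠ l} z m = z l`.
  refine ⟨fun l ↦ c / ∏ s ∈ Finset.range γ, z (l + ((2 * s + 1 : ℕ) : Fin _)),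
    fun l ↦ div_ne_zero hc0 (Finset.prod_ne_zero_iff.2 fun _ _ ↦ hz _), fun l ↦ ?_⟩
  have hpairs := Fin.prod_univ_eq_mul_prod_pairs z l
  rw [hc, ← div_eq_iff (Finset.prod_ne_zero_iff.2 fun _ _ ↦ mul_ne_zero (hz _) (hz _)),
    Finset.prod_mul_distrib] at hpairs
  rw [finRotate_apply, div_mul_div_comm, ← hpairs]
  congr 2
  exact Finset.prod_congr rfl fun s _ ↦ by rw [add_right_comm]

end OddCycle

def cycleToricSet (K : Type*) [Field K] (k : ℕ) : Set (Fin k → K) :=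
  {z | ∃ x : Fin k → K, (∀ m, x m ≠ 0) ∧ ∀ m, z m = x m * x (finRotate k m)}

theorem mem_cycleToricSet_iff {K : Type*} [Field K] {k : ℕ} (hk : Odd k) {z : Fin k → K} :
    z ∈ cycleToricSet K k ↔ (∀ m, z m ≠ 0) ∧ IsSquare (∏ m, z m) := by
  obtain ⟨γ, rfl⟩ := hk
  constructor
  · rintro ⟨x, hx, hxz⟩
    obtain rfl : z = _ := funext hxz
    exact ⟨fun m ↦ mul_ne_zero (hx m) (hx _), isSquare_prod_mul_finRotate x⟩
  · rintro ⟨hz, hsq⟩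
    exact exists_mul_finRotate_eq_of_isSquare hz hsq

theorem mem_cycleToricSet_iff_binomials {K : Type*} [Field K] [Fintype K]
    (hK : Odd (Fintype.card K)) {k γ : ℕ} (hk : k = 2 * γ + 1) {z : Fin k → K} :
    z ∈ cycleToricSet K k ↔ (∀ m, z m ^ (Fintype.card K - 1) = 1) ∧
      ∀ s : Finset (Fin k), s.card = γ →
        ∏ m ∈ s, z m ^ ((Fintype.card K - 1) / 2) =
          ∏ m ∈ sᶜ, z m ^ ((Fintype.card K - 1) / 2) := by
  simp only [mem_cycleToricSet_iff ⟨γ, hk⟩, FiniteField.pow_card_sub_one_eq_one_iff_ne_zero]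
  exact and_congr_right fun hz ↦
    (FiniteField.forall_prod_pow_eq_prod_compl_iff_isSquare hK (by simp [hk]; omega) hz).symm

theorem mem_unionCyclesToricSet_iff {K : Type} [Field K] {r : ℕ} {kf mf : Fin r → ℕ}
    {y : (i : Fin r) × (Fin (mf i) × Fin (kf i)) → K} :
    y ∈ unionCyclesToricSet K r kf mf ↔
      ∀ i j, (fun m ↦ y ⟨i, (j, m)⟩) ∈ cycleToricSet K (kf i) := by
  constructor
  · rintro ⟨x, hx, hxy⟩ i j
    exact ⟨fun m ↦ x ⟨i, (j, m)⟩, fun m ↦ hx _, fun m ↦ hxy _⟩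
  · intro h
    choose x hx hxy using h
    exact ⟨fun p ↦ x p.1 p.2.1 p.2.2, fun p ↦ hx _ _ _, fun p ↦ hxy _ _ _⟩

def unionCyclesGenerators (K : Type) [Field K] (q r : ℕ) (kf mf γf : Fin r → ℕ) :
    Set (MvPolynomial ((i : Fin r) × (Fin (mf i) × Fin (kf i))) K) :=
  {p | ∃ v, p = X v ^ (q - 1) - 1} ∪
    ⋃ (i : Fin r) (j : Fin (mf i)), unionCycleBinomials K q r kf mf γf i j

theorem zeroLocus_span_unionCyclesGenerators {K : Type} [Field K] [Fintype K]
    (hK : Odd (Fintype.card K)) {r : ℕ} {kf mf γf : Fin r → ℕ}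
    (hk : ∀ i, kf i = 2 * γf i + 1) :
    zeroLocus K (Ideal.span (unionCyclesGenerators K (Fintype.card K) r kf mf γf)) =
      unionCyclesToricSet K r kf mf := by
  ext y
  simp only [zeroLocus_span, Set.mem_ofPred_eq, mem_unionCyclesToricSet_iff,
    mem_cycleToricSet_iff_binomials hK (hk _)]
  simp only [unionCyclesGenerators, unionCycleBinomials, Set.mem_union, Set.mem_iUnion,
    Set.mem_ofPred_eq, or_imp, forall_and, forall_exists_index, and_imp,
    forall_comm (α := MvPolynomial _ K), forall_eq, map_sub, map_pow, map_prod, map_one, aeval_X,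
    sub_eq_zero, Sigma.forall, Prod.forall]

theorem vanishingIdeal_unionCyclesToricSet_general (q r : ℕ) (kf mf γf : Fin r → ℕ)
    (hk : ∀ i, kf i = 2 * γf i + 1)
    (K : Type) [Field K] [Fintype K] (hq : Fintype.card K = q) (hq2 : 2 ∣ q - 1) :
    MvPolynomial.vanishingIdeal K (unionCyclesToricSet K r kf mf) =
      Ideal.span
        ({p : MvPolynomial ((i : Fin r) × (Fin (mf i) × Fin (kf i))) K |
            ∃ v : (i : Fin r) × (Fin (mf i) × Fin (kf i)), p = X v ^ (q - 1) - 1} ∪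
          ⋃ (i : Fin r) (j : Fin (mf i)), unionCycleBinomials K q r kf mf γf i j) := by
  subst hq
  have hK : Odd (Fintype.card K) := by
    have := Fintype.one_lt_card (α := K)
    obtain ⟨n, hn⟩ := hq2
    exact ⟨n, by omega⟩
  change _ = Ideal.span (unionCyclesGenerators K (Fintype.card K) r kf mf γf)
  rw [← zeroLocus_span_unionCyclesGenerators hK hk,
    vanishingIdeal_zeroLocus_eq_of_X_pow_card_sub_X_mem]
  intro v
  have hX : (X v ^ Fintype.card K - X v : MvPolynomial _ K) =
      X v * (X v ^ (Fintype.card K - 1) - 1) := by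
    rw [mul_sub_one, ← pow_succ', Nat.sub_add_cancel Fintype.card_pos]
  rw [hX]
  exact Ideal.mul_mem_left _ _ (Ideal.subset_span (Or.inl ⟨v, rfl⟩))

/-- Let `𝒢 = 𝒢₁ ∪ ⋯ ∪ 𝒢_r`, where `𝒢_i` has `mf i` connected components,
each an odd cycle of length `kf i = 2·γf i + 1`. Then `I(X*_𝒢)` is the ideal generated by all
`(t^i_j)^{q−1} − 1` together with the binomials in `⋃_i ⋃_j A^i_j`. -/
theorem vanishingIdeal_unionCyclesToricSet (q r : ℕ) (kf mf γf : Fin r → ℕ)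
    (hγ : ∀ i, 1 ≤ γf i) (hk : ∀ i, kf i = 2 * γf i + 1) (hm : ∀ i, 1 ≤ mf i)
    (K : Type) [Field K] [Fintype K] (hq : Fintype.card K = q) (hq2 : 2 ∣ q - 1) :
    MvPolynomial.vanishingIdeal K (unionCyclesToricSet K r kf mf) =
      Ideal.span
        ({p : MvPolynomial ((i : Fin r) × (Fin (mf i) × Fin (kf i))) K |
            ∃ v : (i : Fin r) × (Fin (mf i) × Fin (kf i)), p = X v ^ (q - 1) - 1} ∪
          ⋃ (i : Fin r) (j : Fin (mf i)), unionCycleBinomials K q r kf mf γf i j) :=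
  vanishingIdeal_unionCyclesToricSet_general q r kf mf γf hk K hq hq2
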